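/- arXiv:math/9803080 — 3 statements merged into one kernel-verified Lean document; each statement's English description precedes it below -/
import Mathlib

section
/- Let su(m) act on Δ = (ℂ²)^{⊗m} via the spin representation, concretely as the span of the operators ρ(X_{kl}), ρ(Y_{kl}) (1 ≤ k < l ≤ m) and ρ(D_1 - D_k) (2 ≤ k ≤ m) where X_{kl} = E_{2k-1,2l-1} + E_{2k,2l}, Y_{kl} = E_{2k-1,2l} - E_{2k,2l-1}, D_k = E_{2k-1,2k}, and ρ(E_{ij}) = (1/2)Φ(e_i)Φ(e_j). Then the vectors u(1,1,…,1) and u(-1,-1,…,-1) are annihilated by all these operators. -/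
open Complex Matrix BigOperators

noncomputable section

/-- The 2×2 identity matrix `E`. -/
def E2 : Matrix (Fin 2) (Fin 2) ℂ := 1

/-- The matrix `T = [[0,-i],[i,0]]`. -/
def Tm : Matrix (Fin 2) (Fin 2) ℂ := !![0, -Complex.I; Complex.I, 0]

/-- The matrix `U = diag(i,-i)`. -/
def Um : Matrix (Fin 2) (Fin 2) ℂ := !![Complex.I, 0; 0, -Complex.I]

/-- The matrix `V = [[0,i],[i,0]]`. -/
def Vm : Matrix (Fin 2) (Fin 2) ℂ := !![0, Complex.I; Complex.I, 0]

/-- The vector `u(ε) = (1/√2)·(1, -ε·i) ∈ ℂ²`. -/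
def uvec (ε : ℂ) : Fin 2 → ℂ := ((Real.sqrt 2 : ℂ))⁻¹ • ![1, -ε * Complex.I]

/-- The basis vector `u(ε_m, …, ε_1) = u(ε_m) ⊗ ⋯ ⊗ u(ε_1)` of `Δ = (ℂ²)^{⊗ m}`,
realized as a function on multi-indices; the index `i = 0` corresponds to the rightmost
tensor factor (i.e. to `ε_1`). -/
def uB {m : ℕ} (ε : Fin m → ℂ) : (Fin m → Fin 2) → ℂ :=
  fun x => ∏ i, uvec (ε i) (x i)

/-- The `m`-fold Kronecker (tensor) product of 2×2 matrices, as a matrix acting on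
`(ℂ²)^{⊗ m}`; the factor `i = 0` is the rightmost one. -/
def tensM {m : ℕ} (M : Fin m → Matrix (Fin 2) (Fin 2) ℂ) :
    Matrix (Fin m → Fin 2) (Fin m → Fin 2) ℂ :=
  Matrix.of fun x y => ∏ i, M i (x i) (y i)

/-- The Clifford representation `Φ` in even dimension `n = 2m` with signs `κ`:
`Φ(e_{2k-1}) = τ_{2k-1}·E^{⊗(m-k)} ⊗ U ⊗ T^{⊗(k-1)}`,
`Φ(e_{2k})   = τ_{2k}·E^{⊗(m-k)} ⊗ V ⊗ T^{⊗(k-1)}`,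
where `τ_j = i` if `κ_j = -1` and `τ_j = 1` if `κ_j = 1`.
Here `j : Fin (2*m)` is the zero-based index, so `j` corresponds to `e_{j+1}`. -/
def PhiEven (m : ℕ) (κ : Fin (2*m) → ℂ) (j : Fin (2*m)) :
    Matrix (Fin m → Fin 2) (Fin m → Fin 2) ℂ :=
  (if κ j = -1 then Complex.I else 1) •
    tensM (fun i => if (i : ℕ) < (j : ℕ)/2 then Tm
      else if (i : ℕ) = (j : ℕ)/2 then (if (j : ℕ) % 2 = 0 then Um else Vm) else E2)

/-- `Δ⁺`: span of the basis vectors `u(ε_m,…,ε_1)` with `∏ ε_j = 1`. -/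
def Dplus (m : ℕ) : Submodule ℂ ((Fin m → Fin 2) → ℂ) :=
  Submodule.span ℂ
    {v | ∃ ε : Fin m → ℂ, (∀ j, ε j = 1 ∨ ε j = -1) ∧ (∏ j, ε j) = 1 ∧ v = uB ε}

/-- `Δ⁻`: span of the basis vectors `u(ε_m,…,ε_1)` with `∏ ε_j = -1`. -/
def Dminus (m : ℕ) : Submodule ℂ ((Fin m → Fin 2) → ℂ) :=
  Submodule.span ℂ
    {v | ∃ ε : Fin m → ℂ, (∀ j, ε j = 1 ∨ ε j = -1) ∧ (∏ j, ε j) = -1 ∧ v = uB ε}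

/-- The spin representation ρ(E_{ij}) = (1/2)·Φ(e_i)·Φ(e_j) of so(2m) on (ℂ²)^{⊗m},
for the positive definite signature (all κ_j = 1). Indices are zero-based. -/
def rhoE (m : ℕ) (i j : Fin (2*m)) : Matrix (Fin m → Fin 2) (Fin m → Fin 2) ℂ :=
  (2⁻¹ : ℂ) • (PhiEven m (fun _ => 1) i * PhiEven m (fun _ => 1) j)

lemma E2_mulVec (v : Fin 2 → ℂ) : E2.mulVec v = v := by simp [E2]

lemma Tm_mulVec (e : ℂ) (he : e * e = 1) : Tm.mulVec (uvec e) = (-e) • uvec e := by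
  funext x
  fin_cases x <;>
    simp only [Tm, uvec, Matrix.mulVec, dotProduct, Fin.sum_univ_two, Fin.isValue,
      Fin.mk_zero, Fin.mk_one, Matrix.cons_val', Matrix.cons_val_zero, Matrix.cons_val_one,
      Matrix.head_cons, Matrix.empty_val', Matrix.cons_val_fin_one, Matrix.head_fin_const,
      Matrix.of_apply, Pi.smul_apply, smul_eq_mul] <;>
    first
      | linear_combination ((Real.sqrt 2 : ℂ))⁻¹ * e * Complex.I_mul_I
      | linear_combination (-(Complex.I * ((Real.sqrt 2 : ℂ))⁻¹)) * he

lemma Um_mulVec (e : ℂ) : Um.mulVec (uvec e) = Complex.I • uvec (-e) := by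
  funext x
  fin_cases x <;>
    simp only [Um, uvec, Matrix.mulVec, dotProduct, Fin.sum_univ_two, Fin.isValue,
      Fin.mk_zero, Fin.mk_one, Matrix.cons_val', Matrix.cons_val_zero, Matrix.cons_val_one,
      Matrix.head_cons, Matrix.empty_val', Matrix.cons_val_fin_one, Matrix.head_fin_const,
      Matrix.of_apply, Pi.smul_apply, smul_eq_mul] <;>
    ring

lemma Vm_mulVec (e : ℂ) (he : e * e = 1) : Vm.mulVec (uvec e) = e • uvec (-e) := by
  funext x
  fin_cases x <;>
    simp only [Vm, uvec, Matrix.mulVec, dotProduct, Fin.sum_univ_two, Fin.isValue,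
      Fin.mk_zero, Fin.mk_one, Matrix.cons_val', Matrix.cons_val_zero, Matrix.cons_val_one,
      Matrix.head_cons, Matrix.empty_val', Matrix.cons_val_fin_one, Matrix.head_fin_const,
      Matrix.of_apply, Pi.smul_apply, smul_eq_mul] <;>
    first
      | linear_combination (-(((Real.sqrt 2 : ℂ))⁻¹ * e)) * Complex.I_mul_I
      | linear_combination (-(Complex.I * ((Real.sqrt 2 : ℂ))⁻¹)) * he

lemma tensM_mulVec {m : ℕ} (M : Fin m → Matrix (Fin 2) (Fin 2) ℂ) (w : Fin m → Fin 2 → ℂ) :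
    (tensM M).mulVec (fun x => ∏ i, w i (x i)) = fun x => ∏ i, ((M i).mulVec (w i)) (x i) := by
  funext x
  show ∑ y : Fin m → Fin 2, (∏ i, M i (x i) (y i)) * ∏ i, w i (y i)
      = ∏ i, ∑ y : Fin 2, M i (x i) y * w i y
  rw [Finset.prod_univ_sum]
  rw [Fintype.piFinset_univ]
  refine Finset.sum_congr rfl fun y _ => ?_
  rw [Finset.prod_mul_distrib]

lemma prod_split {m : ℕ} (p : Fin m) (g : Fin m → ℂ) (t : ℂ) :
    (∏ i : Fin m, (if (i : ℕ) < (p : ℕ) then g i else if (i : ℕ) = (p : ℕ) then t else 1))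
      = t * ∏ i ∈ Finset.univ.filter (fun i : Fin m => (i : ℕ) < (p : ℕ)), g i := by
  rw [← Finset.prod_filter_mul_prod_filter_not Finset.univ (fun i : Fin m => (i : ℕ) < (p : ℕ))]
  have h1 : (∏ i ∈ Finset.univ.filter (fun i : Fin m => (i : ℕ) < (p : ℕ)),
      (if (i : ℕ) < (p : ℕ) then g i else if (i : ℕ) = (p : ℕ) then t else 1))
      = ∏ i ∈ Finset.univ.filter (fun i : Fin m => (i : ℕ) < (p : ℕ)), g i :=
    Finset.prod_congr rfl fun i hi => if_pos (Finset.mem_filter.mp hi).2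
  have h2 : (∏ i ∈ Finset.univ.filter (fun i : Fin m => ¬ (i : ℕ) < (p : ℕ)),
      (if (i : ℕ) < (p : ℕ) then g i else if (i : ℕ) = (p : ℕ) then t else 1)) = t := by
    rw [Finset.prod_eq_single_of_mem p
      (Finset.mem_filter.mpr ⟨Finset.mem_univ _, lt_irrefl _⟩)
      (fun b hb hbp => by
        rw [if_neg (Finset.mem_filter.mp hb).2, if_neg (fun h => hbp (Fin.ext h))])]
    rw [if_neg (lt_irrefl _), if_pos rfl]
  rw [h1, h2, mul_comm]

lemma Phi_uB (m : ℕ) (j : Fin (2*m)) (p : Fin m) (hp : (j : ℕ)/2 = (p : ℕ))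
    (ε : Fin m → ℂ) (hε : ∀ i, ε i * ε i = 1) :
    (PhiEven m (fun _ => 1) j).mulVec (uB ε) =
      ((if (j : ℕ) % 2 = 0 then Complex.I else ε p) *
        ∏ i ∈ Finset.univ.filter (fun i : Fin m => (i : ℕ) < (p : ℕ)), (-ε i)) •
        uB (Function.update ε p (-ε p)) := by
  unfold PhiEven
  rw [if_neg (by norm_num : ¬ ((1:ℂ) = -1)), one_smul, hp]
  have key : ∀ i : Fin m,
      (((if (i : ℕ) < (p : ℕ) then Tm
          else if (i : ℕ) = (p : ℕ) then (if (j : ℕ) % 2 = 0 then Um else Vm)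
          else E2)).mulVec (uvec (ε i)))
      = (fun y => (if (i : ℕ) < (p : ℕ) then -ε i
          else if (i : ℕ) = (p : ℕ) then (if (j : ℕ) % 2 = 0 then Complex.I else ε p) else 1)
          * uvec (Function.update ε p (-ε p) i) y) := by
    intro i
    by_cases h : (i : ℕ) < (p : ℕ)
    · have hip : i ≠ p := fun hh => absurd (congrArg Fin.val hh) (Nat.ne_of_lt h)
      rw [if_pos h, Tm_mulVec (ε i) (hε i), Function.update_of_ne hip]
      funext y; simp [Fin.lt_def, h]
    · by_cases h2 : (i : ℕ) = (p : ℕ)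
      · have hip : i = p := Fin.ext h2
        subst hip
        rw [Function.update_self, if_neg h, if_pos h2]
        by_cases hj : (j : ℕ) % 2 = 0
        · rw [if_pos hj, if_pos hj, Um_mulVec]
          funext y; simp [Fin.lt_def, h, h2, hj]
        · rw [if_neg hj, if_neg hj, Vm_mulVec (ε i) (hε i)]
          funext y; simp [Fin.lt_def, h, h2, hj]
      · have hip : i ≠ p := fun hh => h2 (congrArg Fin.val hh)
        rw [if_neg h, if_neg h2, if_neg h, if_neg h2, E2_mulVec, Function.update_of_ne hip]
        funext y; simp [Fin.lt_def, h, h2]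
  funext x
  have step : ((tensM (fun i : Fin m => if (i : ℕ) < (p : ℕ) then Tm
      else if (i : ℕ) = (p : ℕ) then (if (j : ℕ) % 2 = 0 then Um else Vm) else E2)).mulVec
        (uB ε)) x
      = ∏ i : Fin m, (((if (i : ℕ) < (p : ℕ) then Tm
          else if (i : ℕ) = (p : ℕ) then (if (j : ℕ) % 2 = 0 then Um else Vm)
          else E2)).mulVec (uvec (ε i))) (x i) :=
    congrFun (tensM_mulVec _ (fun i => uvec (ε i))) x
  rw [step]
  have : (∏ i : Fin m, (((if (i : ℕ) < (p : ℕ) then Tm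
      else if (i : ℕ) = (p : ℕ) then (if (j : ℕ) % 2 = 0 then Um else Vm)
      else E2)).mulVec (uvec (ε i))) (x i))
      = ∏ i : Fin m, ((if (i : ℕ) < (p : ℕ) then -ε i
          else if (i : ℕ) = (p : ℕ) then (if (j : ℕ) % 2 = 0 then Complex.I else ε p) else 1)
          * uvec (Function.update ε p (-ε p) i) (x i)) :=
    Finset.prod_congr rfl fun i _ => by rw [key i]
  rw [this, Finset.prod_mul_distrib, prod_split]
  rfl

lemma update_sq {m : ℕ} (ε : Fin m → ℂ) (hε : ∀ i, ε i * ε i = 1) (q : Fin m) :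
    ∀ i, Function.update ε q (-ε q) i * Function.update ε q (-ε q) i = 1 := by
  intro i
  by_cases h : i = q
  · subst h; rw [Function.update_self]; linear_combination hε i
  · rw [Function.update_of_ne h]; exact hε i

lemma rho_uB (m : ℕ) (j₁ j₂ : Fin (2*m)) (p q : Fin m)
    (h1 : (j₁ : ℕ)/2 = (p : ℕ)) (h2 : (j₂ : ℕ)/2 = (q : ℕ))
    (ε : Fin m → ℂ) (hε : ∀ i, ε i * ε i = 1) :
    (rhoE m j₁ j₂).mulVec (uB ε) =
      ((2⁻¹ : ℂ) *
        (((if (j₂ : ℕ) % 2 = 0 then Complex.I else ε q) *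
            ∏ i ∈ Finset.univ.filter (fun i : Fin m => (i : ℕ) < (q : ℕ)), (-ε i)) *
         ((if (j₁ : ℕ) % 2 = 0 then Complex.I else Function.update ε q (-ε q) p) *
            ∏ i ∈ Finset.univ.filter (fun i : Fin m => (i : ℕ) < (p : ℕ)),
              (-Function.update ε q (-ε q) i)))) •
        uB (Function.update (Function.update ε q (-ε q)) p
          (-Function.update ε q (-ε q) p)) := by
  unfold rhoE
  rw [Matrix.smul_mulVec, ← Matrix.mulVec_mulVec, Phi_uB m j₂ q h2 ε hε,
    Matrix.mulVec_smul, Phi_uB m j₁ p h1 _ (update_sq ε hε q), smul_smul, smul_smul]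
  rw [mul_assoc]

lemma prod_update_le {m : ℕ} (c v : ℂ) (p q : Fin m) (hpq : (p : ℕ) ≤ (q : ℕ)) :
    (∏ i ∈ Finset.univ.filter (fun i : Fin m => (i : ℕ) < (p : ℕ)),
        (-Function.update (fun _ => c) q v i))
      = ∏ i ∈ Finset.univ.filter (fun i : Fin m => (i : ℕ) < (p : ℕ)), (-c : ℂ) :=
  Finset.prod_congr rfl fun i hi => by
    have hip := (Finset.mem_filter.mp hi).2
    have : i ≠ q := fun h => by rw [h] at hip; omega
    rw [Function.update_of_ne this]

lemma Xzero (m : ℕ) (c : ℂ) (hcc : c * c = 1) (k l : Fin m) (hkl : k < l)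
    (ha : 2*(k:ℕ) < 2*m) (hb : 2*(l:ℕ) < 2*m) (hc : 2*(k:ℕ)+1 < 2*m) (hd : 2*(l:ℕ)+1 < 2*m) :
    (rhoE m ⟨2*(k:ℕ), ha⟩ ⟨2*(l:ℕ), hb⟩ +
      rhoE m ⟨2*(k:ℕ)+1, hc⟩ ⟨2*(l:ℕ)+1, hd⟩).mulVec (uB (fun _ => c)) = 0 := by
  have hε : ∀ i : Fin m, (fun _ : Fin m => c) i * (fun _ : Fin m => c) i = 1 := fun _ => hcc
  rw [Matrix.add_mulVec,
    rho_uB m ⟨2*(k:ℕ), ha⟩ ⟨2*(l:ℕ), hb⟩ k l (show 2*(k:ℕ)/2 = (k:ℕ) by omega) (show 2*(l:ℕ)/2 = (l:ℕ) by omega) _ hε,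
    rho_uB m ⟨2*(k:ℕ)+1, hc⟩ ⟨2*(l:ℕ)+1, hd⟩ k l (show (2*(k:ℕ)+1)/2 = (k:ℕ) by omega) (show (2*(l:ℕ)+1)/2 = (l:ℕ) by omega) _ hε,
    ← add_smul]
  apply smul_eq_zero_of_left
  rw [if_pos (show (2*(l:ℕ))%2 = 0 by omega), if_pos (show (2*(k:ℕ))%2 = 0 by omega),
    if_neg (show ¬ (2*(l:ℕ)+1)%2 = 0 by omega), if_neg (show ¬ (2*(k:ℕ)+1)%2 = 0 by omega),
    prod_update_le c (-c) k l (le_of_lt hkl),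
    Function.update_of_ne (show k ≠ l from Fin.ne_of_lt hkl)]
  linear_combination
    (2⁻¹ * (∏ i ∈ Finset.univ.filter (fun i : Fin m => (i:ℕ) < (l:ℕ)), (-c)) *
      (∏ i ∈ Finset.univ.filter (fun i : Fin m => (i:ℕ) < (k:ℕ)), (-c))) * Complex.I_mul_I +
    (2⁻¹ * (∏ i ∈ Finset.univ.filter (fun i : Fin m => (i:ℕ) < (l:ℕ)), (-c)) *
      (∏ i ∈ Finset.univ.filter (fun i : Fin m => (i:ℕ) < (k:ℕ)), (-c))) * hcc

lemma Yzero (m : ℕ) (c : ℂ) (hcc : c * c = 1) (k l : Fin m) (hkl : k < l)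
    (ha : 2*(k:ℕ) < 2*m) (hb : 2*(l:ℕ)+1 < 2*m) (hc : 2*(k:ℕ)+1 < 2*m) (hd : 2*(l:ℕ) < 2*m) :
    (rhoE m ⟨2*(k:ℕ), ha⟩ ⟨2*(l:ℕ)+1, hb⟩ -
      rhoE m ⟨2*(k:ℕ)+1, hc⟩ ⟨2*(l:ℕ), hd⟩).mulVec (uB (fun _ => c)) = 0 := by
  have hε : ∀ i : Fin m, (fun _ : Fin m => c) i * (fun _ : Fin m => c) i = 1 := fun _ => hcc
  rw [Matrix.sub_mulVec,
    rho_uB m ⟨2*(k:ℕ), ha⟩ ⟨2*(l:ℕ)+1, hb⟩ k l (show 2*(k:ℕ)/2 = (k:ℕ) by omega)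
      (show (2*(l:ℕ)+1)/2 = (l:ℕ) by omega) _ hε,
    rho_uB m ⟨2*(k:ℕ)+1, hc⟩ ⟨2*(l:ℕ), hd⟩ k l (show (2*(k:ℕ)+1)/2 = (k:ℕ) by omega)
      (show 2*(l:ℕ)/2 = (l:ℕ) by omega) _ hε,
    ← sub_smul]
  apply smul_eq_zero_of_left
  rw [if_pos (show (2*(k:ℕ))%2 = 0 by omega), if_pos (show (2*(l:ℕ))%2 = 0 by omega),
    if_neg (show ¬ (2*(l:ℕ)+1)%2 = 0 by omega), if_neg (show ¬ (2*(k:ℕ)+1)%2 = 0 by omega),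
    prod_update_le c (-c) k l (le_of_lt hkl),
    Function.update_of_ne (show k ≠ l from Fin.ne_of_lt hkl)]
  ring

lemma update_update {m : ℕ} (ε : Fin m → ℂ) (p : Fin m) :
    Function.update (Function.update ε p (-ε p)) p (-Function.update ε p (-ε p) p) = ε := by
  funext i
  by_cases h : i = p
  · subst h; simp
  · simp [Function.update_of_ne h]

lemma Dzero (m : ℕ) (c : ℂ) (hcc : c * c = 1) (k : Fin m)
    (h0 : 0 < 2*m) (h1 : 1 < 2*m) (ha : 2*(k:ℕ) < 2*m) (hb : 2*(k:ℕ)+1 < 2*m) :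
    (rhoE m ⟨0, h0⟩ ⟨1, h1⟩ - rhoE m ⟨2*(k:ℕ), ha⟩ ⟨2*(k:ℕ)+1, hb⟩).mulVec
      (uB (fun _ => c)) = 0 := by
  have hm : 0 < m := k.pos
  have hε : ∀ i : Fin m, (fun _ : Fin m => c) i * (fun _ : Fin m => c) i = 1 := fun _ => hcc
  rw [Matrix.sub_mulVec,
    rho_uB m ⟨0, h0⟩ ⟨1, h1⟩ ⟨0, hm⟩ ⟨0, hm⟩ (show (0:ℕ)/2 = 0 by omega)
      (show (1:ℕ)/2 = 0 by omega) _ hε,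
    rho_uB m ⟨2*(k:ℕ), ha⟩ ⟨2*(k:ℕ)+1, hb⟩ k k (show 2*(k:ℕ)/2 = (k:ℕ) by omega)
      (show (2*(k:ℕ)+1)/2 = (k:ℕ) by omega) _ hε,
    update_update, update_update, ← sub_smul]
  apply smul_eq_zero_of_left
  have hemp : Finset.univ.filter (fun i : Fin m => (i:ℕ) < ((⟨0, hm⟩ : Fin m):ℕ)) = ∅ := by
    apply Finset.filter_false_of_mem
    intro i _
    exact Nat.not_lt_zero _
  rw [if_pos (show (0:ℕ)%2 = 0 by omega), if_pos (show (2*(k:ℕ))%2 = 0 by omega),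
    if_neg (show ¬ (1:ℕ)%2 = 0 by omega), if_neg (show ¬ (2*(k:ℕ)+1)%2 = 0 by omega),
    hemp, prod_update_le c (-c) k k le_rfl, Finset.prod_empty]
  have hP : (∏ i ∈ Finset.univ.filter (fun i : Fin m => (i:ℕ) < (k:ℕ)), (-c : ℂ)) *
      (∏ i ∈ Finset.univ.filter (fun i : Fin m => (i:ℕ) < (k:ℕ)), (-c : ℂ)) = 1 := by
    rw [← Finset.prod_mul_distrib]
    exact Finset.prod_eq_one fun i _ => by linear_combination hcc
  linear_combination (-(2⁻¹ * c * Complex.I)) * hP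


/-- the vectors u(1,…,1) and u(-1,…,-1) are annihilated by the operators
ρ(X_{kl}) = ρ(E_{2k-1,2l-1}) + ρ(E_{2k,2l}), ρ(Y_{kl}) = ρ(E_{2k-1,2l}) - ρ(E_{2k,2l-1})
(1 ≤ k < l ≤ m) and ρ(D_1 - D_k) = ρ(E_{1,2}) - ρ(E_{2k-1,2k}) (2 ≤ k ≤ m), spanning
the spin representation of su(m). (Indices below are zero-based.) -/
theorem stmt10 (m : ℕ) :
    ∀ v ∈ ({uB (fun _ => (1 : ℂ)), uB (fun _ => (-1 : ℂ))} :
        Set ((Fin m → Fin 2) → ℂ)),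
      (∀ k l : Fin m, k < l →
        ((rhoE m ⟨2*(k : ℕ), by have := k.isLt; omega⟩ ⟨2*(l : ℕ), by have := l.isLt; omega⟩ +
          rhoE m ⟨2*(k : ℕ)+1, by have := k.isLt; omega⟩
            ⟨2*(l : ℕ)+1, by have := l.isLt; omega⟩).mulVec v = 0 ∧
         (rhoE m ⟨2*(k : ℕ), by have := k.isLt; omega⟩
            ⟨2*(l : ℕ)+1, by have := l.isLt; omega⟩ -
          rhoE m ⟨2*(k : ℕ)+1, by have := k.isLt; omega⟩
            ⟨2*(l : ℕ), by have := l.isLt; omega⟩).mulVec v = 0)) ∧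
      (∀ k : Fin m, 0 < (k : ℕ) →
        (rhoE m ⟨0, by have := k.isLt; omega⟩ ⟨1, by have := k.isLt; omega⟩ -
         rhoE m ⟨2*(k : ℕ), by have := k.isLt; omega⟩
           ⟨2*(k : ℕ)+1, by have := k.isLt; omega⟩).mulVec v = 0) := by
  intro v hv
  simp only [Set.mem_insert_iff, Set.mem_singleton_iff] at hv
  obtain ⟨c, hcc, rfl⟩ : ∃ c : ℂ, c * c = 1 ∧ v = uB (fun _ : Fin m => c) := by
    rcases hv with h | h
    · exact ⟨1, by norm_num, h⟩
    · exact ⟨-1, by norm_num, h⟩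
  exact ⟨fun k l hkl => ⟨Xzero m c hcc k l hkl _ _ _ _, Yzero m c hcc k l hkl _ _ _ _⟩,
    fun k _ => Dzero m c hcc k _ _ _ _⟩
end
end

section
/- The spinor φ = u(1,1,1) + i·u(-1,-1,-1) ∈ (ℂ²)^{⊗3} is annihilated by the 14-dimensional Lie algebra g₂ ⊂ so(7) spanned by E₁₂-E₃₄, E₁₂-E₅₆, E₁₃+E₂₄, E₁₃-E₆₇, E₁₄-E₂₃, E₁₄-E₅₇, E₁₅+E₂₆, E₁₅+E₄₇, E₁₆-E₂₅, E₁₆+E₃₇, E₁₇-E₃₆, E₁₇-E₄₅, E₂₇-E₃₅, E₂₇+E₄₆, acting via the spin representation E_{ij} ↦ (1/2)Φ(e_i)Φ(e_j). -/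
open Complex Matrix BigOperators

noncomputable section

/-- The odd-dimensional Clifford representation Φ of Cl(7) on (ℂ²)^{⊗3} (first component
of the odd-dimensional construction, all κ_j = 1): Φ(e_k) = Φ₆(e_k) for k ≤ 6 and
Φ(e_7) = i·T⊗T⊗T. Indices are zero-based. -/
def Phi7 (j : Fin 7) : Matrix (Fin 3 → Fin 2) (Fin 3 → Fin 2) ℂ :=
  if h : (j : ℕ) < 6 then PhiEven 3 (fun _ => 1) ⟨(j : ℕ), by omega⟩
  else Complex.I • tensM (fun _ => Tm)

/-- ρ(E_{ij}) = (1/2)·Φ(e_i)·Φ(e_j), zero-based indices. -/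
def rho7 (i j : Fin 7) : Matrix (Fin 3 → Fin 2) (Fin 3 → Fin 2) ℂ :=
  (2⁻¹ : ℂ) • (Phi7 i * Phi7 j)

/-- The spin-representation images of the 14 spanning elements of g₂ ⊂ so(7):
E₁₂-E₃₄, E₁₂-E₅₆, E₁₃+E₂₄, E₁₃-E₆₇, E₁₄-E₂₃, E₁₄-E₅₇, E₁₅+E₂₆, E₁₅+E₄₇, E₁₆-E₂₅,
E₁₆+E₃₇, E₁₇-E₃₆, E₁₇-E₄₅, E₂₇-E₃₅, E₂₇+E₄₆ (translated to zero-based indices). -/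
def g2ops : List (Matrix (Fin 3 → Fin 2) (Fin 3 → Fin 2) ℂ) :=
  [rho7 0 1 - rho7 2 3, rho7 0 1 - rho7 4 5, rho7 0 2 + rho7 1 3, rho7 0 2 - rho7 5 6,
   rho7 0 3 - rho7 1 2, rho7 0 3 - rho7 4 6, rho7 0 4 + rho7 1 5, rho7 0 4 + rho7 3 6,
   rho7 0 5 - rho7 1 4, rho7 0 5 + rho7 2 6, rho7 0 6 - rho7 2 5, rho7 0 6 - rho7 3 4,
   rho7 1 6 - rho7 2 4, rho7 1 6 + rho7 3 5]

/-- The spinor φ = u(1,1,1) + i·u(-1,-1,-1) ∈ (ℂ²)^{⊗3}. -/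
def phiG2 : (Fin 3 → Fin 2) → ℂ :=
  uB (fun _ => (1 : ℂ)) + Complex.I • uB (fun _ => (-1 : ℂ))



lemma tens_mulVec3 (M : Fin 3 → Matrix (Fin 2) (Fin 2) ℂ) (w : Fin 3 → Fin 2 → ℂ) :
    (tensM M).mulVec (fun x => ∏ i, w i (x i)) = fun x => ∏ i, (M i).mulVec (w i) (x i) := by
  funext x
  simp only [Matrix.mulVec, dotProduct, tensM, Matrix.of_apply]
  rw [Fintype.prod_sum (fun i j => M i (x i) j * w i j)]
  exact Finset.sum_congr rfl fun y _ => (Finset.prod_mul_distrib).symm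

lemma E2_act (ε : ℂ) : E2.mulVec (uvec ε) = (1 : ℂ) • uvec ε := by
  simp [E2]

lemma Tm_act (ε : ℂ) (h : ε * ε = 1) : Tm.mulVec (uvec ε) = (-ε) • uvec ε := by
  funext i
  fin_cases i <;>
    simp only [Tm, uvec, Matrix.mulVec, dotProduct, Fin.sum_univ_two, Pi.smul_apply,
      smul_eq_mul, Matrix.cons_val_zero, Matrix.cons_val_one, Matrix.head_cons,
      Matrix.cons_val', Matrix.empty_val', Matrix.cons_val_fin_one, Fin.isValue,
      Fin.mk_zero, Fin.mk_one, Matrix.of_apply, Matrix.cons_val', Matrix.head_fin_const] <;>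
    first
      | linear_combination (((Real.sqrt 2 : ℝ) : ℂ))⁻¹ * ε * Complex.I_sq
      | linear_combination Complex.I * (((Real.sqrt 2 : ℝ) : ℂ))⁻¹ * h
      | linear_combination -2 * Complex.I * (((Real.sqrt 2 : ℝ) : ℂ))⁻¹ * h
      | linear_combination -Complex.I * (((Real.sqrt 2 : ℝ) : ℂ))⁻¹ * h

lemma Um_act (ε : ℂ) : Um.mulVec (uvec ε) = Complex.I • uvec (-ε) := by
  funext i
  fin_cases i <;>
    simp [Um, uvec, Matrix.mulVec, dotProduct, Fin.sum_univ_two] <;> ring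

lemma Vm_act (ε : ℂ) (h : ε * ε = 1) : Vm.mulVec (uvec ε) = ε • uvec (-ε) := by
  funext i
  fin_cases i <;>
    simp only [Vm, uvec, Matrix.mulVec, dotProduct, Fin.sum_univ_two, Pi.smul_apply,
      smul_eq_mul, Matrix.cons_val_zero, Matrix.cons_val_one, Matrix.head_cons,
      Matrix.cons_val', Matrix.empty_val', Matrix.cons_val_fin_one, Fin.isValue,
      Fin.mk_zero, Fin.mk_one, Matrix.of_apply, Matrix.head_fin_const] <;>
    first
      | linear_combination (-ε * (((Real.sqrt 2 : ℝ) : ℂ))⁻¹) * Complex.I_sq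
      | linear_combination -Complex.I * (((Real.sqrt 2 : ℝ) : ℂ))⁻¹ * h
      | linear_combination Complex.I * (((Real.sqrt 2 : ℝ) : ℂ))⁻¹ * h

lemma tens_act {M0 M1 M2 : Matrix (Fin 2) (Fin 2) ℂ} {a b c a' b' c' s0 s1 s2 : ℂ}
    (h0 : M0.mulVec (uvec a) = s0 • uvec a') (h1 : M1.mulVec (uvec b) = s1 • uvec b')
    (h2 : M2.mulVec (uvec c) = s2 • uvec c') :
    (tensM ![M0, M1, M2]).mulVec (uB ![a, b, c]) = (s0 * s1 * s2) • uB ![a', b', c'] := by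
  have key := tens_mulVec3 ![M0, M1, M2] (fun i => uvec (![a, b, c] i))
  have hu : uB ![a, b, c] = fun x => ∏ i, uvec (![a, b, c] i) (x i) := rfl
  rw [hu, key]
  funext x
  simp only [Fin.prod_univ_three, Matrix.cons_val_zero, Matrix.cons_val_one, Matrix.head_cons,
    Matrix.cons_val_two, Matrix.tail_cons, h0, h1, h2, uB, Pi.smul_apply, smul_eq_mul]
  ring

lemma Phi7_eq0 : Phi7 0 = tensM ![Um, E2, E2] := by
  rw [Phi7, dif_pos (by decide)]
  rw [PhiEven, if_neg (by norm_num)]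
  rw [one_smul]
  congr 1
  try (funext i; fin_cases i <;> simp)

lemma Phi7_eq1 : Phi7 1 = tensM ![Vm, E2, E2] := by
  rw [Phi7, dif_pos (by decide)]
  rw [PhiEven, if_neg (by norm_num)]
  rw [one_smul]
  congr 1
  try (funext i; fin_cases i <;> simp)

lemma Phi7_eq2 : Phi7 2 = tensM ![Tm, Um, E2] := by
  rw [Phi7, dif_pos (by decide)]
  rw [PhiEven, if_neg (by norm_num)]
  rw [one_smul]
  congr 1
  try (funext i; fin_cases i <;> simp)

lemma Phi7_eq3 : Phi7 3 = tensM ![Tm, Vm, E2] := by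
  rw [Phi7, dif_pos (by decide)]
  rw [PhiEven, if_neg (by norm_num)]
  rw [one_smul]
  congr 1
  try (funext i; fin_cases i <;> simp)

lemma Phi7_eq4 : Phi7 4 = tensM ![Tm, Tm, Um] := by
  rw [Phi7, dif_pos (by decide)]
  rw [PhiEven, if_neg (by norm_num)]
  rw [one_smul]
  congr 1
  try (funext i; fin_cases i <;> simp)

lemma Phi7_eq5 : Phi7 5 = tensM ![Tm, Tm, Vm] := by
  rw [Phi7, dif_pos (by decide)]
  rw [PhiEven, if_neg (by norm_num)]
  rw [one_smul]
  congr 1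
  try (funext i; fin_cases i <;> simp)

lemma Phi7_eq6 : Phi7 6 = Complex.I • tensM ![Tm, Tm, Tm] := by
  rw [Phi7, dif_neg (by decide)]
  congr 1
  try (funext i; fin_cases i <;> simp)

lemma P0 (a b c : ℂ) :
    (Phi7 0).mulVec (uB ![a, b, c]) = (Complex.I * 1 * 1) • uB ![-a, b, c] := by
  rw [Phi7_eq0]; exact tens_act (Um_act a) (E2_act b) (E2_act c)

lemma P1 (a b c : ℂ) (ha : a * a = 1) :
    (Phi7 1).mulVec (uB ![a, b, c]) = (a * 1 * 1) • uB ![-a, b, c] := by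
  rw [Phi7_eq1]; exact tens_act (Vm_act a ha) (E2_act b) (E2_act c)

lemma P2 (a b c : ℂ) (ha : a * a = 1) :
    (Phi7 2).mulVec (uB ![a, b, c]) = (-a * Complex.I * 1) • uB ![a, -b, c] := by
  rw [Phi7_eq2]; exact tens_act (Tm_act a ha) (Um_act b) (E2_act c)

lemma P3 (a b c : ℂ) (ha : a * a = 1) (hb : b * b = 1) :
    (Phi7 3).mulVec (uB ![a, b, c]) = (-a * b * 1) • uB ![a, -b, c] := by
  rw [Phi7_eq3]; exact tens_act (Tm_act a ha) (Vm_act b hb) (E2_act c)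

lemma P4 (a b c : ℂ) (ha : a * a = 1) (hb : b * b = 1) :
    (Phi7 4).mulVec (uB ![a, b, c]) = (-a * -b * Complex.I) • uB ![a, b, -c] := by
  rw [Phi7_eq4]; exact tens_act (Tm_act a ha) (Tm_act b hb) (Um_act c)

lemma P5 (a b c : ℂ) (ha : a * a = 1) (hb : b * b = 1) (hc : c * c = 1) :
    (Phi7 5).mulVec (uB ![a, b, c]) = (-a * -b * c) • uB ![a, b, -c] := by
  rw [Phi7_eq5]; exact tens_act (Tm_act a ha) (Tm_act b hb) (Vm_act c hc)

lemma P6 (a b c : ℂ) (ha : a * a = 1) (hb : b * b = 1) (hc : c * c = 1) :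
    (Phi7 6).mulVec (uB ![a, b, c]) = (Complex.I * (-a * -b * -c)) • uB ![a, b, c] := by
  rw [Phi7_eq6, Matrix.smul_mulVec,
    tens_act (Tm_act a ha) (Tm_act b hb) (Tm_act c hc), smul_smul]

lemma rho_act {i j : Fin 7} {v w u : (Fin 3 → Fin 2) → ℂ} {s t : ℂ}
    (hj : (Phi7 j).mulVec v = s • w) (hi : (Phi7 i).mulVec w = t • u) :
    (rho7 i j).mulVec v = (2⁻¹ * (s * t)) • u := by
  rw [rho7, Matrix.smul_mulVec, ← Matrix.mulVec_mulVec, hj, Matrix.mulVec_smul, hi,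
    smul_smul, smul_smul, mul_assoc]

lemma phiG2_eq : phiG2 = uB ![(1 : ℂ), 1, 1] + Complex.I • uB ![(-1 : ℂ), -1, -1] := by
  have h1 : (fun _ : Fin 3 => (1 : ℂ)) = ![(1 : ℂ), 1, 1] := by funext i; fin_cases i <;> rfl
  have h2 : (fun _ : Fin 3 => (-1 : ℂ)) = ![(-1 : ℂ), -1, -1] := by funext i; fin_cases i <;> rfl
  rw [phiG2, h1, h2]

/-- φ = u(1,1,1) + i·u(-1,-1,-1) is annihilated by the 14-dimensional
Lie algebra g₂ ⊂ so(7) acting via the spin representation E_{ij} ↦ (1/2)Φ(e_i)Φ(e_j). -/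
theorem stmt14 : ∀ A ∈ g2ops, A.mulVec phiG2 = 0 := by
  intro A hA
  fin_cases hA
  · rw [phiG2_eq, Matrix.sub_mulVec, Matrix.mulVec_add, Matrix.mulVec_add,
        Matrix.mulVec_smul, Matrix.mulVec_smul,
        rho_act (P1 (1) (1) (1) (by norm_num)) (P0 (-(1)) (1) (1)),
        rho_act (P1 (-1) (-1) (-1) (by norm_num)) (P0 (-(-1)) (-1) (-1)),
        rho_act (P3 (1) (1) (1) (by norm_num) (by norm_num)) (P2 (1) (-(1)) (1) (by norm_num)),
        rho_act (P3 (-1) (-1) (-1) (by norm_num) (by norm_num)) (P2 (-1) (-(-1)) (-1) (by norm_num))]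
    norm_num
    try match_scalars <;>
      first
        | ring1
        | linear_combination (1/2 : ℂ) * Complex.I_sq
        | linear_combination (-1/2 : ℂ) * Complex.I_sq
        | linear_combination Complex.I_sq
        | linear_combination -Complex.I_sq
        | linear_combination Complex.I * Complex.I_sq
        | linear_combination -Complex.I * Complex.I_sq
        | linear_combination (Complex.I/2) * Complex.I_sq
        | linear_combination (-Complex.I/2) * Complex.I_sq
  · rw [phiG2_eq, Matrix.sub_mulVec, Matrix.mulVec_add, Matrix.mulVec_add,
        Matrix.mulVec_smul, Matrix.mulVec_smul,
        rho_act (P1 (1) (1) (1) (by norm_num)) (P0 (-(1)) (1) (1)),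
        rho_act (P1 (-1) (-1) (-1) (by norm_num)) (P0 (-(-1)) (-1) (-1)),
        rho_act (P5 (1) (1) (1) (by norm_num) (by norm_num) (by norm_num)) (P4 (1) (1) (-(1)) (by norm_num) (by norm_num)),
        rho_act (P5 (-1) (-1) (-1) (by norm_num) (by norm_num) (by norm_num)) (P4 (-1) (-1) (-(-1)) (by norm_num) (by norm_num))]
    norm_num
    try match_scalars <;>
      first
        | ring1
        | linear_combination (1/2 : ℂ) * Complex.I_sq
        | linear_combination (-1/2 : ℂ) * Complex.I_sq
        | linear_combination Complex.I_sq
        | linear_combination -Complex.I_sq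
        | linear_combination Complex.I * Complex.I_sq
        | linear_combination -Complex.I * Complex.I_sq
        | linear_combination (Complex.I/2) * Complex.I_sq
        | linear_combination (-Complex.I/2) * Complex.I_sq
  · rw [phiG2_eq, Matrix.add_mulVec, Matrix.mulVec_add, Matrix.mulVec_add,
        Matrix.mulVec_smul, Matrix.mulVec_smul,
        rho_act (P2 (1) (1) (1) (by norm_num)) (P0 (1) (-(1)) (1)),
        rho_act (P2 (-1) (-1) (-1) (by norm_num)) (P0 (-1) (-(-1)) (-1)),
        rho_act (P3 (1) (1) (1) (by norm_num) (by norm_num)) (P1 (1) (-(1)) (1) (by norm_num)),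
        rho_act (P3 (-1) (-1) (-1) (by norm_num) (by norm_num)) (P1 (-1) (-(-1)) (-1) (by norm_num))]
    norm_num
    try match_scalars <;>
      first
        | ring1
        | linear_combination (1/2 : ℂ) * Complex.I_sq
        | linear_combination (-1/2 : ℂ) * Complex.I_sq
        | linear_combination Complex.I_sq
        | linear_combination -Complex.I_sq
        | linear_combination Complex.I * Complex.I_sq
        | linear_combination -Complex.I * Complex.I_sq
        | linear_combination (Complex.I/2) * Complex.I_sq
        | linear_combination (-Complex.I/2) * Complex.I_sq
  · rw [phiG2_eq, Matrix.sub_mulVec, Matrix.mulVec_add, Matrix.mulVec_add,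
        Matrix.mulVec_smul, Matrix.mulVec_smul,
        rho_act (P2 (1) (1) (1) (by norm_num)) (P0 (1) (-(1)) (1)),
        rho_act (P2 (-1) (-1) (-1) (by norm_num)) (P0 (-1) (-(-1)) (-1)),
        rho_act (P6 (1) (1) (1) (by norm_num) (by norm_num) (by norm_num)) (P5 (1) (1) (1) (by norm_num) (by norm_num) (by norm_num)),
        rho_act (P6 (-1) (-1) (-1) (by norm_num) (by norm_num) (by norm_num)) (P5 (-1) (-1) (-1) (by norm_num) (by norm_num) (by norm_num))]
    norm_num
    try match_scalars <;>
      first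
        | ring1
        | linear_combination (1/2 : ℂ) * Complex.I_sq
        | linear_combination (-1/2 : ℂ) * Complex.I_sq
        | linear_combination Complex.I_sq
        | linear_combination -Complex.I_sq
        | linear_combination Complex.I * Complex.I_sq
        | linear_combination -Complex.I * Complex.I_sq
        | linear_combination (Complex.I/2) * Complex.I_sq
        | linear_combination (-Complex.I/2) * Complex.I_sq
  · rw [phiG2_eq, Matrix.sub_mulVec, Matrix.mulVec_add, Matrix.mulVec_add,
        Matrix.mulVec_smul, Matrix.mulVec_smul,
        rho_act (P3 (1) (1) (1) (by norm_num) (by norm_num)) (P0 (1) (-(1)) (1)),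
        rho_act (P3 (-1) (-1) (-1) (by norm_num) (by norm_num)) (P0 (-1) (-(-1)) (-1)),
        rho_act (P2 (1) (1) (1) (by norm_num)) (P1 (1) (-(1)) (1) (by norm_num)),
        rho_act (P2 (-1) (-1) (-1) (by norm_num)) (P1 (-1) (-(-1)) (-1) (by norm_num))]
    norm_num
    try match_scalars <;>
      first
        | ring1
        | linear_combination (1/2 : ℂ) * Complex.I_sq
        | linear_combination (-1/2 : ℂ) * Complex.I_sq
        | linear_combination Complex.I_sq
        | linear_combination -Complex.I_sq
        | linear_combination Complex.I * Complex.I_sq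
        | linear_combination -Complex.I * Complex.I_sq
        | linear_combination (Complex.I/2) * Complex.I_sq
        | linear_combination (-Complex.I/2) * Complex.I_sq
  · rw [phiG2_eq, Matrix.sub_mulVec, Matrix.mulVec_add, Matrix.mulVec_add,
        Matrix.mulVec_smul, Matrix.mulVec_smul,
        rho_act (P3 (1) (1) (1) (by norm_num) (by norm_num)) (P0 (1) (-(1)) (1)),
        rho_act (P3 (-1) (-1) (-1) (by norm_num) (by norm_num)) (P0 (-1) (-(-1)) (-1)),
        rho_act (P6 (1) (1) (1) (by norm_num) (by norm_num) (by norm_num)) (P4 (1) (1) (1) (by norm_num) (by norm_num)),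
        rho_act (P6 (-1) (-1) (-1) (by norm_num) (by norm_num) (by norm_num)) (P4 (-1) (-1) (-1) (by norm_num) (by norm_num))]
    norm_num
    try match_scalars <;>
      first
        | ring1
        | linear_combination (1/2 : ℂ) * Complex.I_sq
        | linear_combination (-1/2 : ℂ) * Complex.I_sq
        | linear_combination Complex.I_sq
        | linear_combination -Complex.I_sq
        | linear_combination Complex.I * Complex.I_sq
        | linear_combination -Complex.I * Complex.I_sq
        | linear_combination (Complex.I/2) * Complex.I_sq
        | linear_combination (-Complex.I/2) * Complex.I_sq
  · rw [phiG2_eq, Matrix.add_mulVec, Matrix.mulVec_add, Matrix.mulVec_add,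
        Matrix.mulVec_smul, Matrix.mulVec_smul,
        rho_act (P4 (1) (1) (1) (by norm_num) (by norm_num)) (P0 (1) (1) (-(1))),
        rho_act (P4 (-1) (-1) (-1) (by norm_num) (by norm_num)) (P0 (-1) (-1) (-(-1))),
        rho_act (P5 (1) (1) (1) (by norm_num) (by norm_num) (by norm_num)) (P1 (1) (1) (-(1)) (by norm_num)),
        rho_act (P5 (-1) (-1) (-1) (by norm_num) (by norm_num) (by norm_num)) (P1 (-1) (-1) (-(-1)) (by norm_num))]
    norm_num
    try match_scalars <;>
      first
        | ring1
        | linear_combination (1/2 : ℂ) * Complex.I_sq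
        | linear_combination (-1/2 : ℂ) * Complex.I_sq
        | linear_combination Complex.I_sq
        | linear_combination -Complex.I_sq
        | linear_combination Complex.I * Complex.I_sq
        | linear_combination -Complex.I * Complex.I_sq
        | linear_combination (Complex.I/2) * Complex.I_sq
        | linear_combination (-Complex.I/2) * Complex.I_sq
  · rw [phiG2_eq, Matrix.add_mulVec, Matrix.mulVec_add, Matrix.mulVec_add,
        Matrix.mulVec_smul, Matrix.mulVec_smul,
        rho_act (P4 (1) (1) (1) (by norm_num) (by norm_num)) (P0 (1) (1) (-(1))),
        rho_act (P4 (-1) (-1) (-1) (by norm_num) (by norm_num)) (P0 (-1) (-1) (-(-1))),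
        rho_act (P6 (1) (1) (1) (by norm_num) (by norm_num) (by norm_num)) (P3 (1) (1) (1) (by norm_num) (by norm_num)),
        rho_act (P6 (-1) (-1) (-1) (by norm_num) (by norm_num) (by norm_num)) (P3 (-1) (-1) (-1) (by norm_num) (by norm_num))]
    norm_num
    try match_scalars <;>
      first
        | ring1
        | linear_combination (1/2 : ℂ) * Complex.I_sq
        | linear_combination (-1/2 : ℂ) * Complex.I_sq
        | linear_combination Complex.I_sq
        | linear_combination -Complex.I_sq
        | linear_combination Complex.I * Complex.I_sq
        | linear_combination -Complex.I * Complex.I_sq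
        | linear_combination (Complex.I/2) * Complex.I_sq
        | linear_combination (-Complex.I/2) * Complex.I_sq
  · rw [phiG2_eq, Matrix.sub_mulVec, Matrix.mulVec_add, Matrix.mulVec_add,
        Matrix.mulVec_smul, Matrix.mulVec_smul,
        rho_act (P5 (1) (1) (1) (by norm_num) (by norm_num) (by norm_num)) (P0 (1) (1) (-(1))),
        rho_act (P5 (-1) (-1) (-1) (by norm_num) (by norm_num) (by norm_num)) (P0 (-1) (-1) (-(-1))),
        rho_act (P4 (1) (1) (1) (by norm_num) (by norm_num)) (P1 (1) (1) (-(1)) (by norm_num)),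
        rho_act (P4 (-1) (-1) (-1) (by norm_num) (by norm_num)) (P1 (-1) (-1) (-(-1)) (by norm_num))]
    norm_num
    try match_scalars <;>
      first
        | ring1
        | linear_combination (1/2 : ℂ) * Complex.I_sq
        | linear_combination (-1/2 : ℂ) * Complex.I_sq
        | linear_combination Complex.I_sq
        | linear_combination -Complex.I_sq
        | linear_combination Complex.I * Complex.I_sq
        | linear_combination -Complex.I * Complex.I_sq
        | linear_combination (Complex.I/2) * Complex.I_sq
        | linear_combination (-Complex.I/2) * Complex.I_sq
  · rw [phiG2_eq, Matrix.add_mulVec, Matrix.mulVec_add, Matrix.mulVec_add,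
        Matrix.mulVec_smul, Matrix.mulVec_smul,
        rho_act (P5 (1) (1) (1) (by norm_num) (by norm_num) (by norm_num)) (P0 (1) (1) (-(1))),
        rho_act (P5 (-1) (-1) (-1) (by norm_num) (by norm_num) (by norm_num)) (P0 (-1) (-1) (-(-1))),
        rho_act (P6 (1) (1) (1) (by norm_num) (by norm_num) (by norm_num)) (P2 (1) (1) (1) (by norm_num)),
        rho_act (P6 (-1) (-1) (-1) (by norm_num) (by norm_num) (by norm_num)) (P2 (-1) (-1) (-1) (by norm_num))]
    norm_num
    try match_scalars <;>
      first
        | ring1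
        | linear_combination (1/2 : ℂ) * Complex.I_sq
        | linear_combination (-1/2 : ℂ) * Complex.I_sq
        | linear_combination Complex.I_sq
        | linear_combination -Complex.I_sq
        | linear_combination Complex.I * Complex.I_sq
        | linear_combination -Complex.I * Complex.I_sq
        | linear_combination (Complex.I/2) * Complex.I_sq
        | linear_combination (-Complex.I/2) * Complex.I_sq
  · rw [phiG2_eq, Matrix.sub_mulVec, Matrix.mulVec_add, Matrix.mulVec_add,
        Matrix.mulVec_smul, Matrix.mulVec_smul,
        rho_act (P6 (1) (1) (1) (by norm_num) (by norm_num) (by norm_num)) (P0 (1) (1) (1)),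
        rho_act (P6 (-1) (-1) (-1) (by norm_num) (by norm_num) (by norm_num)) (P0 (-1) (-1) (-1)),
        rho_act (P5 (1) (1) (1) (by norm_num) (by norm_num) (by norm_num)) (P2 (1) (1) (-(1)) (by norm_num)),
        rho_act (P5 (-1) (-1) (-1) (by norm_num) (by norm_num) (by norm_num)) (P2 (-1) (-1) (-(-1)) (by norm_num))]
    norm_num
    try match_scalars <;>
      first
        | ring1
        | linear_combination (1/2 : ℂ) * Complex.I_sq
        | linear_combination (-1/2 : ℂ) * Complex.I_sq
        | linear_combination Complex.I_sq
        | linear_combination -Complex.I_sq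
        | linear_combination Complex.I * Complex.I_sq
        | linear_combination -Complex.I * Complex.I_sq
        | linear_combination (Complex.I/2) * Complex.I_sq
        | linear_combination (-Complex.I/2) * Complex.I_sq
  · rw [phiG2_eq, Matrix.sub_mulVec, Matrix.mulVec_add, Matrix.mulVec_add,
        Matrix.mulVec_smul, Matrix.mulVec_smul,
        rho_act (P6 (1) (1) (1) (by norm_num) (by norm_num) (by norm_num)) (P0 (1) (1) (1)),
        rho_act (P6 (-1) (-1) (-1) (by norm_num) (by norm_num) (by norm_num)) (P0 (-1) (-1) (-1)),
        rho_act (P4 (1) (1) (1) (by norm_num) (by norm_num)) (P3 (1) (1) (-(1)) (by norm_num) (by norm_num)),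
        rho_act (P4 (-1) (-1) (-1) (by norm_num) (by norm_num)) (P3 (-1) (-1) (-(-1)) (by norm_num) (by norm_num))]
    norm_num
    try match_scalars <;>
      first
        | ring1
        | linear_combination (1/2 : ℂ) * Complex.I_sq
        | linear_combination (-1/2 : ℂ) * Complex.I_sq
        | linear_combination Complex.I_sq
        | linear_combination -Complex.I_sq
        | linear_combination Complex.I * Complex.I_sq
        | linear_combination -Complex.I * Complex.I_sq
        | linear_combination (Complex.I/2) * Complex.I_sq
        | linear_combination (-Complex.I/2) * Complex.I_sq
  · rw [phiG2_eq, Matrix.sub_mulVec, Matrix.mulVec_add, Matrix.mulVec_add,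
        Matrix.mulVec_smul, Matrix.mulVec_smul,
        rho_act (P6 (1) (1) (1) (by norm_num) (by norm_num) (by norm_num)) (P1 (1) (1) (1) (by norm_num)),
        rho_act (P6 (-1) (-1) (-1) (by norm_num) (by norm_num) (by norm_num)) (P1 (-1) (-1) (-1) (by norm_num)),
        rho_act (P4 (1) (1) (1) (by norm_num) (by norm_num)) (P2 (1) (1) (-(1)) (by norm_num)),
        rho_act (P4 (-1) (-1) (-1) (by norm_num) (by norm_num)) (P2 (-1) (-1) (-(-1)) (by norm_num))]
    norm_num
    try match_scalars <;>
      first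
        | ring1
        | linear_combination (1/2 : ℂ) * Complex.I_sq
        | linear_combination (-1/2 : ℂ) * Complex.I_sq
        | linear_combination Complex.I_sq
        | linear_combination -Complex.I_sq
        | linear_combination Complex.I * Complex.I_sq
        | linear_combination -Complex.I * Complex.I_sq
        | linear_combination (Complex.I/2) * Complex.I_sq
        | linear_combination (-Complex.I/2) * Complex.I_sq
  · rw [phiG2_eq, Matrix.add_mulVec, Matrix.mulVec_add, Matrix.mulVec_add,
        Matrix.mulVec_smul, Matrix.mulVec_smul,
        rho_act (P6 (1) (1) (1) (by norm_num) (by norm_num) (by norm_num)) (P1 (1) (1) (1) (by norm_num)),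
        rho_act (P6 (-1) (-1) (-1) (by norm_num) (by norm_num) (by norm_num)) (P1 (-1) (-1) (-1) (by norm_num)),
        rho_act (P5 (1) (1) (1) (by norm_num) (by norm_num) (by norm_num)) (P3 (1) (1) (-(1)) (by norm_num) (by norm_num)),
        rho_act (P5 (-1) (-1) (-1) (by norm_num) (by norm_num) (by norm_num)) (P3 (-1) (-1) (-(-1)) (by norm_num) (by norm_num))]
    norm_num
    try match_scalars <;>
      first
        | ring1
        | linear_combination (1/2 : ℂ) * Complex.I_sq
        | linear_combination (-1/2 : ℂ) * Complex.I_sq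
        | linear_combination Complex.I_sq
        | linear_combination -Complex.I_sq
        | linear_combination Complex.I * Complex.I_sq
        | linear_combination -Complex.I * Complex.I_sq
        | linear_combination (Complex.I/2) * Complex.I_sq
        | linear_combination (-Complex.I/2) * Complex.I_sq
end
end

section
/- The spinor ψ = u(1,-1,-1,1) - u(-1,1,1,-1) ∈ (ℂ²)^{⊗4} lies in the positive half-spinor module Δ₈⁺ and is annihilated by the 21-dimensional Lie algebra spin(7) ⊂ so(8) spanned by the 24 listed elements E₁₂+E₃₄, E₁₃-E₂₄, E₁₄+E₂₃, E₅₆+E₇₈, -E₅₇+E₆₈, E₅₈+E₆₇, -E₁₅+E₂₆, E₁₂+E₅₆, E₁₆+E₂₅, E₃₇-E₄₈, E₃₄+E₇₈, E₃₈+E₄₇, E₁₂-E₇₈, E₁₇+E₂₈, E₁₈-E₂₇, E₃₄-E₅₆, E₃₅+E₄₆, E₃₆-E₄₅, E₁₈+E₃₆, E₁₇+E₃₅, E₂₆-E₄₈, E₂₅+E₃₈, E₂₃+E₆₇, E₂₄+E₅₇, acting via E_{ij} ↦ (1/2)Φ(e_i)Φ(e_j). -/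
/-!
On a product vector `u(ε) = u(ε₄) ⊗ ⋯ ⊗ u(ε₁)` with all `εᵢ = ±1` the factors act by
`T u(e) = -e u(e)`, `U u(e) = i u(-e)`, `V u(e) = e u(-e)`. Hence `Φ(e_j)` maps `u(ε)` to a multiple
of `u(ε')`, where `ε'` is `ε` with the sign in slot `⌊j/2⌋` flipped, and each `ρ(E_ab)` maps a
basis vector to an explicit multiple of a basis vector. Applied to `ψ`, every listed generator then
gives a combination of basis vectors with coefficients in `{±1/2, ±i/2}` that cancels.
Both sign vectors in `ψ` have product `1`, so `ψ ∈ Δ₈⁺`.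
-/

open Complex Matrix BigOperators

noncomputable section

/-- The Clifford representation Φ of Cl(8) on (ℂ²)^{⊗4} (all κ_j = 1), zero-based. -/
def Phi8 (j : Fin 8) : Matrix (Fin 4 → Fin 2) (Fin 4 → Fin 2) ℂ :=
  PhiEven 4 (fun _ => 1) ⟨(j : ℕ), by have := j.isLt; omega⟩

/-- ρ(E_{ij}) = (1/2)·Φ(e_i)·Φ(e_j), zero-based indices. -/
def rho8 (i j : Fin 8) : Matrix (Fin 4 → Fin 2) (Fin 4 → Fin 2) ℂ :=
  (2⁻¹ : ℂ) • (Phi8 i * Phi8 j)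

/-- The spin-representation images of the 24 listed spanning elements of
spin(7) ⊂ so(8) (translated to zero-based indices). -/
def spin7ops : List (Matrix (Fin 4 → Fin 2) (Fin 4 → Fin 2) ℂ) :=
  [rho8 0 1 + rho8 2 3, rho8 0 2 - rho8 1 3, rho8 0 3 + rho8 1 2,
   rho8 4 5 + rho8 6 7, -rho8 4 6 + rho8 5 7, rho8 4 7 + rho8 5 6,
   -rho8 0 4 + rho8 1 5, rho8 0 1 + rho8 4 5, rho8 0 5 + rho8 1 4,
   rho8 2 6 - rho8 3 7, rho8 2 3 + rho8 6 7, rho8 2 7 + rho8 3 6,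
   rho8 0 1 - rho8 6 7, rho8 0 6 + rho8 1 7, rho8 0 7 - rho8 1 6,
   rho8 2 3 - rho8 4 5, rho8 2 4 + rho8 3 5, rho8 2 5 - rho8 3 4,
   rho8 0 7 + rho8 2 5, rho8 0 6 + rho8 2 4, rho8 1 5 - rho8 3 7,
   rho8 1 4 + rho8 2 7, rho8 1 2 + rho8 5 6, rho8 1 3 + rho8 4 6]

/-- The spinor ψ = u(1,-1,-1,1) - u(-1,1,1,-1) ∈ (ℂ²)^{⊗4}
(the argument of uB lists (ε₁,ε₂,ε₃,ε₄), with ε₁ the rightmost tensor factor). -/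
def psiSpin7 : (Fin 4 → Fin 2) → ℂ :=
  uB (![1, -1, -1, 1] : Fin 4 → ℂ) - uB (![-1, 1, 1, -1] : Fin 4 → ℂ)

theorem tensM_mulVec_prod {m : ℕ} (M : Fin m → Matrix (Fin 2) (Fin 2) ℂ)
    (v : Fin m → Fin 2 → ℂ) :
    tensM M *ᵥ (fun x => ∏ i, v i (x i)) = fun x => ∏ i, (M i *ᵥ v i) (x i) := by
  funext x
  simp only [mulVec, dotProduct, tensM, of_apply, Finset.prod_univ_sum,
    Fintype.piFinset_univ, Finset.prod_mul_distrib]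

theorem Tm_mulVec_uvec {e : ℂ} (he : e = 1 ∨ e = -1) : Tm *ᵥ uvec e = (-e) • uvec e := by
  ext s
  rcases he with rfl | rfl <;> fin_cases s <;>
    simp [Tm, uvec, mulVec, dotProduct, mul_left_comm I, mul_comm I]

theorem Um_mulVec_uvec (e : ℂ) : Um *ᵥ uvec e = I • uvec (-e) := by
  ext s
  fin_cases s <;> simp [Um, uvec, mulVec, dotProduct]

theorem Vm_mulVec_uvec {e : ℂ} (he : e = 1 ∨ e = -1) : Vm *ᵥ uvec e = e • uvec (-e) := by
  ext s
  rcases he with rfl | rfl <;> fin_cases s <;>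
    simp [Vm, uvec, mulVec, dotProduct, mul_assoc, mul_left_comm I, mul_comm I]

def phiSlot {m : ℕ} (j : Fin (2 * m)) : Fin m := ⟨(j : ℕ) / 2, Nat.div_lt_of_lt_mul j.isLt⟩

def flipSign {m : ℕ} (k : Fin m) (ε : Fin m → ℂ) : Fin m → ℂ := Function.update ε k (-ε k)

theorem flipSign_eq_one_or_eq_neg_one {m : ℕ} (k : Fin m) {ε : Fin m → ℂ}
    (hε : ∀ i, ε i = 1 ∨ ε i = -1) (i : Fin m) :
    flipSign k ε i = 1 ∨ flipSign k ε i = -1 := by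
  rcases eq_or_ne i k with rfl | hik
  · rcases hε i with h | h <;> simp [flipSign, h]
  · rw [flipSign, Function.update_of_ne hik]
    exact hε i

def phiCoeff {m : ℕ} (κ : Fin (2 * m) → ℂ) (j : Fin (2 * m)) (ε : Fin m → ℂ) : ℂ :=
  (if κ j = -1 then I else 1) *
    ∏ i : Fin m, if (i : ℕ) < (j : ℕ) / 2 then -ε i
      else if (i : ℕ) = (j : ℕ) / 2 then (if (j : ℕ) % 2 = 0 then I else ε i) else 1

theorem PhiEven_mulVec_uB {m : ℕ} (κ : Fin (2 * m) → ℂ) (j : Fin (2 * m)) {ε : Fin m → ℂ}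
    (hε : ∀ i, ε i = 1 ∨ ε i = -1) :
    PhiEven m κ j *ᵥ uB ε = phiCoeff κ j ε • uB (flipSign (phiSlot j) ε) := by
  unfold PhiEven uB
  rw [smul_mulVec, tensM_mulVec_prod, phiCoeff, mul_smul]
  congr 1
  funext x
  rw [Pi.smul_apply, smul_eq_mul, ← Finset.prod_mul_distrib]
  refine Finset.prod_congr rfl fun i _ => ?_
  have hslot : i = phiSlot j ↔ (i : ℕ) = (j : ℕ) / 2 := Fin.ext_iff
  split_ifs with hlt heq
  · rw [flipSign, Function.update_of_ne (by rw [Ne, hslot]; omega), Tm_mulVec_uvec (hε i),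
      Pi.smul_apply, smul_eq_mul]
  · obtain rfl := hslot.mpr heq
    rw [flipSign, Function.update_self, Um_mulVec_uvec, Pi.smul_apply, smul_eq_mul]
  · obtain rfl := hslot.mpr heq
    rw [flipSign, Function.update_self, Vm_mulVec_uvec (hε _), Pi.smul_apply, smul_eq_mul]
  · rw [flipSign, Function.update_of_ne (by rwa [Ne, hslot]), E2, one_mulVec, one_mul]

theorem PhiEven_mul_PhiEven_mulVec_uB {m : ℕ} (κ : Fin (2 * m) → ℂ) (a b : Fin (2 * m))
    {ε : Fin m → ℂ} (hε : ∀ i, ε i = 1 ∨ ε i = -1) :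
    (PhiEven m κ a * PhiEven m κ b) *ᵥ uB ε =
      (phiCoeff κ b ε * phiCoeff κ a (flipSign (phiSlot b) ε)) •
        uB (flipSign (phiSlot a) (flipSign (phiSlot b) ε)) := by
  rw [← mulVec_mulVec, PhiEven_mulVec_uB κ b hε, mulVec_smul,
    PhiEven_mulVec_uB κ a (flipSign_eq_one_or_eq_neg_one _ hε), smul_smul]

theorem flipSign_vec4 (k : Fin 4) (a b c d : ℂ) :
    flipSign k ![a, b, c, d] = ![if k = 0 then -a else a, if k = 1 then -b else b,
      if k = 2 then -c else c, if k = 3 then -d else d] := by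
  funext i
  fin_cases i <;> fin_cases k <;> simp [flipSign]

theorem uB_mem_Dplus {m : ℕ} {ε : Fin m → ℂ} (hε : ∀ j, ε j = 1 ∨ ε j = -1)
    (hprod : ∏ j, ε j = 1) : uB ε ∈ Dplus m :=
  Submodule.subset_span ⟨ε, hε, hprod, rfl⟩

/-- ψ = u(1,-1,-1,1) - u(-1,1,1,-1) lies in the positive half-spinor
module Δ₈⁺ and is annihilated by the 21-dimensional Lie algebra spin(7) ⊂ so(8)
(spanned by the 24 listed elements), acting via E_{ij} ↦ (1/2)Φ(e_i)Φ(e_j). -/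
theorem stmt16 :
    psiSpin7 ∈ Dplus 4 ∧ ∀ A ∈ spin7ops, A.mulVec psiSpin7 = 0 := by
  have hp : ∀ i, ![(1 : ℂ), -1, -1, 1] i = 1 ∨ ![(1 : ℂ), -1, -1, 1] i = -1 := by
    intro i; fin_cases i <;> simp
  have hm : ∀ i, ![(-1 : ℂ), 1, 1, -1] i = 1 ∨ ![(-1 : ℂ), 1, 1, -1] i = -1 := by
    intro i; fin_cases i <;> simp
  refine ⟨sub_mem (uB_mem_Dplus hp (by simp [Fin.prod_univ_four]))
    (uB_mem_Dplus hm (by simp [Fin.prod_univ_four])), ?_⟩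
  intro A hA
  simp only [spin7ops, List.mem_cons, List.not_mem_nil, or_false] at hA
  rcases hA with rfl | rfl | rfl | rfl | rfl | rfl | rfl | rfl | rfl | rfl | rfl | rfl |
    rfl | rfl | rfl | rfl | rfl | rfl | rfl | rfl | rfl | rfl | rfl | rfl <;>
  simp +decide [psiSpin7, rho8, Phi8, add_mulVec, sub_mulVec, neg_mulVec, mulVec_sub, smul_mulVec,
    PhiEven_mul_PhiEven_mulVec_uB _ _ _ hp, PhiEven_mul_PhiEven_mulVec_uB _ _ _ hm,
    phiCoeff, phiSlot, flipSign_vec4, Fin.prod_univ_four, show (1 : ℂ) ≠ -1 by norm_num, add_comm]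
end
end
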